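/- Garsia–Rodemich–Rumsey inequality for doubly twisted increments. Let (V,‖·‖) be a Banach space, T > 0 and ξ, η ≥ 0. Let R : {(t,s) : 0 ≤ s ≤ t ≤ T} → V be continuous with R_{tt} = 0 for all t. Let ψ, φ : [0,∞) → [0,∞) be continuous and strictly increasing with ψ(0) = 0, φ(0) = 0 and ψ(x) → ∞ as x → ∞, and set U = ∬_{0<v<w<T} ψ( ‖R_{wv}‖/φ(w−v) ) dv dw. Assume there exists C ≥ 0 such that for all 0 ≤ ℓ₁ < ℓ₂ ≤ T, sup_{ℓ₁ ≤ u ≤ ℓ₂} ‖R_{ℓ₂ℓ₁} − e^{−η(u−ℓ₁)} R_{ℓ₂u} − e^{−ξ(ℓ₂−u)} R_{uℓ₁}‖ ≤ ψ^{−1}( 4C/(ℓ₂−ℓ₁)² ) φ(ℓ₂−ℓ₁). Then there exists an absolute constant c > 0 (independent of all the data) such that for all 0 ≤ s ≤ t ≤ T, ‖R_{ts}‖ ≤ c ∫₀^{t−s} [ ψ^{−1}(4U/r²) + ψ^{−1}(4C/r²) ] dφ(r), where the integral is the Lebesgue–Stieltjes integral with respect to φ, with values in [0,∞]. -/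

import Mathlib

/-!
Garsia–Rodemich–Rumsey chaining for `N(t, s) = ‖R_{ts}‖`; write
`Q = ∫_{(0, t-s]} (ψ⁻¹(4U/r²) + ψ⁻¹(4C/r²)) dφ(r)`. Since the exponential weights lie in `(0, 1]`,
the bound on the doubly twisted increment gives the approximate triangle inequality
`N(t, s) ≤ N(t, u) + N(u, s) + ψ⁻¹(4C/(t-s)²) φ(t-s)`, and the last term is at most `Q`.
Let `K(w, v) = ψ(N(w, v)/φ(w-v))` on `0 < v < w < T`, so that `U = ∬ K`. By Markov's inequality
some `a ∈ (s, t)` has row and column integrals of `K` at most `2U/(t-s)`. From `x₀ = a` build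
`x₀ > x₁ > ⋯ ↓ s`: given `xₙ`, take `dₙ₊₁` with `φ(dₙ₊₁) = φ(xₙ - s)/2` and, by Markov again,
`xₙ₊₁ ∈ (s, s + dₙ₊₁)` with row integral at most `2U/dₙ₊₁` and `K(xₙ, xₙ₊₁) ≤ 4U/(dₙ₊₁ dₙ)`.
Each link, with its triangle defect, is at most four times the integral defining `Q` restricted
to `(dₙ₊₂, dₙ₊₁]`; these intervals are disjoint and `N(xₙ, s) → 0`, so `N(a, s) ≤ 4Q`. The time
reversal `(t, s) ↦ (T - s, T - t)` swaps rows and columns of `K` and turns the way from `a` up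
to `t` into a chain of the same kind, so `N(t, a) ≤ 4Q`; hence `N(t, s) ≤ 9Q`.
-/

open MeasureTheory
open scoped ENNReal

/-- Extension of the inverse `ψ⁻¹` to `[0,∞]`, sending `∞` to `∞`. -/
noncomputable def psiInvE (ψinv : ℝ → ℝ) (y : ℝ≥0∞) : ℝ≥0∞ :=
  if y = ⊤ then ⊤ else ENNReal.ofReal (ψinv y.toReal)

universe u

open Set Filter Function
open scoped Topology

theorem exists_mem_le_two_mul_div_of_setLIntegral_le {α : Type*} [MeasurableSpace α]
    {μ : Measure α} {s : Set α} (hμ : μ s ≠ 0) (hμ' : μ s ≠ ∞) {f g : α → ℝ≥0∞}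
    (hf : AEMeasurable f (μ.restrict s)) (hg : AEMeasurable g (μ.restrict s)) {F G : ℝ≥0∞}
    (hF : F ≠ ∞) (hG : G ≠ ∞) (hfF : ∫⁻ x in s, f x ∂μ ≤ F) (hgG : ∫⁻ x in s, g x ∂μ ≤ G) :
    ∃ x ∈ s, f x ≤ 2 * F / μ s ∧ g x ≤ 2 * G / μ s := by
  have hmean : ∫⁻ x in s, (f x / F + g x / G) ∂μ ≤ 2 := by
    simp_rw [div_eq_mul_inv]
    rw [lintegral_add_left' (hf.mul_const _), lintegral_mul_const'' _ hf,
      lintegral_mul_const'' _ hg, ← one_add_one_eq_two]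
    gcongr
    · exact ENNReal.div_le_of_le_mul (by simpa using hfF)
    · exact ENNReal.div_le_of_le_mul (by simpa using hgG)
  obtain ⟨x, hx, hle⟩ := exists_le_setLAverage hμ hμ' ((hf.div_const F).add (hg.div_const G))
  have hle' : f x / F + g x / G ≤ 2 / μ s :=
    hle.trans (by rw [setLAverage_eq]; exact ENNReal.div_le_div_right hmean _)
  have hfin : 2 / μ s ≠ ∞ := ENNReal.div_ne_top (by norm_num) hμ
  refine ⟨x, hx, ?_, ?_⟩
  · rw [ENNReal.mul_div_right_comm]
    exact (ENNReal.div_le_iff_le_mul (.inr hfin) (.inl hF)).1 (le_self_add.trans hle')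
  · rw [ENNReal.mul_div_right_comm]
    exact (ENNReal.div_le_iff_le_mul (.inr hfin) (.inl hG)).1 (le_add_self.trans hle')

theorem two_mul_ofReal_div_ofReal {b c : ℝ} (hc : 0 < c) :
    2 * ENNReal.ofReal b / ENNReal.ofReal c = ENNReal.ofReal (2 * b / c) := by
  rw [ENNReal.ofReal_div_of_pos hc, ENNReal.ofReal_mul zero_le_two, ENNReal.ofReal_ofNat]

theorem ofReal_le_mul_lintegral_Ioc_of_le_add {μ : Measure ℝ} {G : ℝ → ℝ≥0∞} {c : ℝ≥0∞}
    {a b D : ℕ → ℝ} {L : ℝ} (hD : Antitone D) (hD0 : ∀ n, 0 ≤ D n) (hL : D 0 ≤ L)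
    (hab : ∀ n, b n ≤ a n + b (n + 1))
    (ha : ∀ n, ENNReal.ofReal (a n) ≤ c * ∫⁻ r in Ioc (D (n + 1)) (D n), G r ∂μ)
    (hb : Tendsto b atTop (𝓝 0)) :
    ENNReal.ofReal (b 0) ≤ c * ∫⁻ r in Ioc 0 L, G r ∂μ := by
  have partial_sum : ∀ M, ENNReal.ofReal (b 0)
      ≤ c * ∫⁻ r in Ioc (D M) (D 0), G r ∂μ + ENNReal.ofReal (b M) := by
    intro M
    induction M with
    | zero => simp
    | succ M ih =>
      calc ENNReal.ofReal (b 0)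
          ≤ c * ∫⁻ r in Ioc (D M) (D 0), G r ∂μ + ENNReal.ofReal (b M) := ih
        _ ≤ c * ∫⁻ r in Ioc (D M) (D 0), G r ∂μ
              + (c * ∫⁻ r in Ioc (D (M + 1)) (D M), G r ∂μ + ENNReal.ofReal (b (M + 1))) := by
            gcongr
            exact (ENNReal.ofReal_le_ofReal (hab M)).trans
              (ENNReal.ofReal_add_le.trans (add_le_add_left (ha M) _))
        _ = c * ∫⁻ r in Ioc (D (M + 1)) (D 0), G r ∂μ + ENNReal.ofReal (b (M + 1)) := by
            rw [← add_assoc, ← mul_add, add_comm (∫⁻ r in Ioc (D M) (D 0), G r ∂μ),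
              ← lintegral_union measurableSet_Ioc (Ioc_disjoint_Ioc_of_le le_rfl),
              Ioc_union_Ioc_eq_Ioc (hD M.le_succ) (hD M.zero_le)]
  have hlim : Tendsto (fun M => c * ∫⁻ r in Ioc 0 L, G r ∂μ + ENNReal.ofReal (b M)) atTop
      (𝓝 (c * ∫⁻ r in Ioc 0 L, G r ∂μ)) := by
    simpa using tendsto_const_nhds.add (ENNReal.tendsto_ofReal hb)
  refine ge_of_tendsto' hlim fun M => (partial_sum M).trans ?_
  gcongr
  exact hD0 M

theorem ofReal_mul_le_mul_lintegral_Ioc (φ : StieltjesFunction ℝ) {G : ℝ → ℝ≥0∞}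
    {a b c y k : ℝ} (hc : 0 ≤ c) (hk : 0 ≤ k) (hy : φ y ≤ k * (φ b - φ a))
    (hG : ∀ r ∈ Ioc a b, ENNReal.ofReal c ≤ G r) :
    ENNReal.ofReal (c * φ y) ≤ ENNReal.ofReal k * ∫⁻ r in Ioc a b, G r ∂φ.measure := by
  calc ENNReal.ofReal (c * φ y)
      ≤ ENNReal.ofReal (c * (k * (φ b - φ a))) := by gcongr
    _ = ENNReal.ofReal k * (ENNReal.ofReal c * φ.measure (Ioc a b)) := by
        rw [StieltjesFunction.measure_Ioc, ENNReal.ofReal_mul hc, ENNReal.ofReal_mul hk]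
        ring
    _ ≤ ENNReal.ofReal k * ∫⁻ r in Ioc a b, G r ∂φ.measure := by
        rw [← setLIntegral_const]
        gcongr _ * ?_
        exact setLIntegral_mono' measurableSet_Ioc hG

theorem exists_seq_of_forall_exists {α : Type*} {P : α → Prop} {r : α → α → Prop}
    (h : ∀ a, P a → ∃ b, P b ∧ r a b) {a : α} (ha : P a) :
    ∃ f : ℕ → α, f 0 = a ∧ ∀ n, P (f n) ∧ r (f n) (f (n + 1)) := by
  choose next hnext using fun b : Subtype P => h b.1 b.2
  let f : ℕ → Subtype P := fun n => (fun b => ⟨next b, (hnext b).1⟩)^[n] ⟨a, ha⟩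
  refine ⟨fun n => (f n).1, rfl, fun n => ⟨(f n).2, ?_⟩⟩
  simp only [f, iterate_succ_apply']
  exact (hnext _).2

theorem tendsto_zero_of_le_half {u : ℕ → ℝ} (hu : ∀ n, 0 ≤ u n)
    (h : ∀ n, u (n + 1) ≤ u n / 2) : Tendsto u atTop (𝓝 0) := by
  refine squeeze_zero hu (fun n => le_geom (c := 1 / 2) (by norm_num) n
    fun k _ => by linarith [h k]) ?_
  simpa using (tendsto_pow_atTop_nhds_zero_of_lt_one (r := (1 / 2 : ℝ)) (by norm_num)
    (by norm_num)).mul_const (u 0)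

theorem pos_of_strictMonoOn_Ici {φ : ℝ → ℝ} (hφ : StrictMonoOn φ (Ici 0)) (hφ0 : φ 0 = 0)
    {r : ℝ} (hr : 0 < r) : 0 < φ r :=
  hφ0 ▸ hφ self_mem_Ici hr.le hr

theorem exists_mem_Ioo_eq_half {φ : ℝ → ℝ} (hφ : ContinuousOn φ (Ici 0)) (hφ0 : φ 0 = 0)
    {δ : ℝ} (hδ : 0 < δ) (hφδ : 0 < φ δ) : ∃ d ∈ Ioo 0 δ, φ d = φ δ / 2 :=
  intermediate_value_Ioo hδ.le (hφ.mono Icc_subset_Ici_self) ⟨by linarith, by linarith⟩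

theorem tendsto_zero_of_apply_le_half {φ : ℝ → ℝ} (hφ : StrictMonoOn φ (Ici 0)) (hφ0 : φ 0 = 0)
    {δ : ℕ → ℝ} (hδ : ∀ n, 0 < δ n) (h : ∀ n, φ (δ (n + 1)) ≤ φ (δ n) / 2) :
    Tendsto δ atTop (𝓝 0) := by
  have hφδ : Tendsto (fun n => φ (δ n)) atTop (𝓝 0) :=
    tendsto_zero_of_le_half (fun n => (pos_of_strictMonoOn_Ici hφ hφ0 (hδ n)).le) h
  refine tendsto_order.2 ⟨fun a ha => .of_forall fun n => ha.trans (hδ n), fun ε hε => ?_⟩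
  filter_upwards [(tendsto_order.1 hφδ).2 _ (pos_of_strictMonoOn_Ici hφ hφ0 hε)] with n hn
  exact (hφ.lt_iff_lt (hδ n).le hε.le).1 hn

theorem norm_le_norm_add_norm_add_norm_sub_smul_sub_smul {V : Type*} [SeminormedAddCommGroup V]
    [NormedSpace ℝ V] {a b : ℝ} (ha : |a| ≤ 1) (hb : |b| ≤ 1) (x y z : V) :
    ‖x‖ ≤ ‖y‖ + ‖z‖ + ‖x - a • y - b • z‖ := by
  calc ‖x‖ = ‖(x - a • y - b • z) + a • y + b • z‖ := by congr 1; abel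
    _ ≤ ‖x - a • y - b • z‖ + ‖a • y‖ + ‖b • z‖ := norm_add₃_le
    _ ≤ ‖x - a • y - b • z‖ + ‖y‖ + ‖z‖ := by
        rw [norm_smul, norm_smul, Real.norm_eq_abs, Real.norm_eq_abs]
        gcongr
        · exact mul_le_of_le_one_left (norm_nonneg _) ha
        · exact mul_le_of_le_one_left (norm_nonneg _) hb
    _ = ‖y‖ + ‖z‖ + ‖x - a • y - b • z‖ := by ring

theorem abs_exp_neg_mul_le_one {c x : ℝ} (hc : 0 ≤ c) (hx : 0 ≤ x) : |Real.exp (-c * x)| ≤ 1 := by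
  rw [abs_of_pos (Real.exp_pos _), Real.exp_le_one_iff]
  nlinarith

theorem norm_le_add_of_norm_doublyTwisted_le {V : Type*} [SeminormedAddCommGroup V]
    [NormedSpace ℝ V] {R : ℝ → ℝ → V} {ξ η B l₁ u l₂ : ℝ} (hξ : 0 ≤ ξ) (hη : 0 ≤ η)
    (h₁ : l₁ ≤ u) (h₂ : u ≤ l₂)
    (h : ‖R l₂ l₁ - Real.exp (-η * (u - l₁)) • R l₂ u - Real.exp (-ξ * (l₂ - u)) • R u l₁‖ ≤ B) :
    ‖R l₂ l₁‖ ≤ ‖R l₂ u‖ + ‖R u l₁‖ + B :=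
  (norm_le_norm_add_norm_add_norm_sub_smul_sub_smul
    (abs_exp_neg_mul_le_one hη (sub_nonneg.2 h₁)) (abs_exp_neg_mul_le_one hξ (sub_nonneg.2 h₂))
    _ _ _).trans (by gcongr)

noncomputable def grrIntegrand (ψinv : ℝ → ℝ) (U C r : ℝ) : ℝ≥0∞ :=
  ENNReal.ofReal (ψinv (4 * U / r ^ 2)) + ENNReal.ofReal (ψinv (4 * C / r ^ 2))

section Inverse

variable {ψ ψinv : ℝ → ℝ}

theorem le_rightInv_iff_of_strictMonoOn (hψ : StrictMonoOn ψ (Ici 0))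
    (hinv : ∀ y, 0 ≤ y → ψ (ψinv y) = y) (hinv0 : ∀ y, 0 ≤ y → 0 ≤ ψinv y)
    {x y : ℝ} (hx : 0 ≤ x) (hy : 0 ≤ y) : x ≤ ψinv y ↔ ψ x ≤ y := by
  conv_rhs => rw [← hinv y hy]
  exact (hψ.le_iff_le hx (hinv0 y hy)).symm

theorem monotoneOn_of_le_iff_le (hinv0 : ∀ y, 0 ≤ y → 0 ≤ ψinv y)
    (hψ : ∀ x y, 0 ≤ x → 0 ≤ y → (x ≤ ψinv y ↔ ψ x ≤ y)) : MonotoneOn ψinv (Ici 0) := by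
  intro y₁ hy₁ y₂ hy₂ h
  rw [hψ _ _ (hinv0 _ hy₁) hy₂]
  exact ((hψ _ _ (hinv0 _ hy₁) hy₁).1 le_rfl).trans h

theorem apply_four_mul_div_le_of_sq_le (hmono : MonotoneOn ψinv (Ici 0)) {K r X : ℝ} (hK : 0 ≤ K)
    (hr : 0 < r) (hX : r ^ 2 ≤ X) : ψinv (4 * K / X) ≤ ψinv (4 * K / r ^ 2) :=
  hmono (div_nonneg (by positivity) ((by positivity : (0 : ℝ) ≤ r ^ 2).trans hX))
    (mem_Ici.2 (by positivity)) (by gcongr)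

theorem ofReal_add_le_grrIntegrand (hmono : MonotoneOn ψinv (Ici 0))
    (hinv0 : ∀ y, 0 ≤ y → 0 ≤ ψinv y) {U C r A B : ℝ} (hU : 0 ≤ U) (hC : 0 ≤ C) (hr : 0 < r)
    (hA : r ^ 2 ≤ A) (hB : r ^ 2 ≤ B) :
    ENNReal.ofReal (ψinv (4 * U / A) + ψinv (4 * C / B)) ≤ grrIntegrand ψinv U C r := by
  have hA0 : 0 ≤ A := (by positivity : (0 : ℝ) ≤ r ^ 2).trans hA
  have hB0 : 0 ≤ B := (by positivity : (0 : ℝ) ≤ r ^ 2).trans hB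
  rw [ENNReal.ofReal_add (hinv0 _ (by positivity)) (hinv0 _ (by positivity))]
  exact add_le_add (ENNReal.ofReal_le_ofReal (apply_four_mul_div_le_of_sq_le hmono hU hr hA))
    (ENNReal.ofReal_le_ofReal (apply_four_mul_div_le_of_sq_le hmono hC hr hB))

end Inverse

section Kernel

variable (T : ℝ)

def openTriangle : Set (ℝ × ℝ) := {p | 0 < p.2 ∧ p.2 < p.1 ∧ p.1 < T}

def closedTriangle : Set (ℝ × ℝ) := {p | 0 ≤ p.2 ∧ p.2 ≤ p.1 ∧ p.1 ≤ T}

theorem isOpen_openTriangle : IsOpen (openTriangle T) :=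
  (isOpen_lt continuous_const continuous_snd).inter <|
    (isOpen_lt continuous_snd continuous_fst).inter (isOpen_lt continuous_fst continuous_const)

theorem openTriangle_subset_closedTriangle : openTriangle T ⊆ closedTriangle T :=
  fun _ ⟨h₁, h₂, h₃⟩ => ⟨h₁.le, h₂.le, h₃.le⟩

variable (ψ φ : ℝ → ℝ) (N : ℝ → ℝ → ℝ)

noncomputable def grrKernel : ℝ × ℝ → ℝ≥0∞ :=
  (openTriangle T).indicator fun p => ENNReal.ofReal (ψ (N p.1 p.2 / φ (p.1 - p.2)))

def timeReverse : ℝ → ℝ → ℝ := fun x y => N (T - y) (T - x)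

variable {T ψ φ N}

theorem measurable_grrKernel (hN : ContinuousOn (uncurry N) (closedTriangle T))
    (hN0 : ∀ x y, 0 ≤ N x y) (hψ : ContinuousOn ψ (Ici 0)) (hφ : ContinuousOn φ (Ici 0))
    (hφpos : ∀ r, 0 < r → 0 < φ r) : Measurable (grrKernel T ψ φ N) := by
  classical
  have hφ' : ContinuousOn (fun p : ℝ × ℝ => φ (p.1 - p.2)) (openTriangle T) :=
    hφ.comp (by fun_prop) fun p hp => sub_nonneg.2 hp.2.1.le
  have hφpos' : ∀ p ∈ openTriangle T, 0 < φ (p.1 - p.2) := fun p hp => hφpos _ (sub_pos.2 hp.2.1)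
  have hq : ContinuousOn (fun p : ℝ × ℝ => ψ (N p.1 p.2 / φ (p.1 - p.2))) (openTriangle T) :=
    hψ.comp ((hN.mono (openTriangle_subset_closedTriangle T)).div hφ' fun p hp => (hφpos' p hp).ne')
      fun p hp => div_nonneg (hN0 _ _) (hφpos' p hp).le
  have h := (ENNReal.continuous_ofReal.comp_continuousOn hq).measurable_piecewise
    (continuousOn_const (c := (0 : ℝ≥0∞))) (isOpen_openTriangle T).measurableSet
  rw [← Pi.zero_def, piecewise_eq_indicator] at h
  exact h

theorem grrKernel_timeReverse (x v : ℝ) :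
    grrKernel T ψ φ (timeReverse T N) (x, v) = grrKernel T ψ φ N (T - v, T - x) := by
  have hmem : (x, v) ∈ openTriangle T ↔ (T - v, T - x) ∈ openTriangle T := by
    constructor <;> rintro ⟨h₁, h₂, h₃⟩ <;> refine ⟨?_, ?_, ?_⟩ <;> dsimp only at * <;> linarith
  by_cases h : (x, v) ∈ openTriangle T
  · simp only [grrKernel, indicator_of_mem h, indicator_of_mem (hmem.1 h), timeReverse,
      sub_sub_sub_cancel_left]
  · simp only [grrKernel, indicator_of_notMem h, indicator_of_notMem (mt hmem.2 h)]

theorem continuousOn_timeReverse (hN : ContinuousOn (uncurry N) (closedTriangle T)) :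
    ContinuousOn (uncurry (timeReverse T N)) (closedTriangle T) :=
  hN.comp (by fun_prop : Continuous fun p : ℝ × ℝ => (T - p.2, T - p.1)).continuousOn
    fun p ⟨h₁, h₂, h₃⟩ => ⟨sub_nonneg.2 h₃, by linarith, by linarith⟩

theorem lintegral_grrKernel_timeReverse (x : ℝ) :
    ∫⁻ v, grrKernel T ψ φ (timeReverse T N) (x, v) = ∫⁻ w, grrKernel T ψ φ N (w, T - x) := by
  simp_rw [grrKernel_timeReverse]
  exact lintegral_sub_left_eq_self (fun w => grrKernel T ψ φ N (w, T - x)) T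

theorem lintegral_lintegral_grrKernel_timeReverse (hK : Measurable (grrKernel T ψ φ N)) :
    ∫⁻ x, ∫⁻ v, grrKernel T ψ φ (timeReverse T N) (x, v)
      = ∫⁻ x, ∫⁻ v, grrKernel T ψ φ N (x, v) := by
  simp_rw [lintegral_grrKernel_timeReverse]
  rw [lintegral_sub_left_eq_self (fun y => ∫⁻ w, grrKernel T ψ φ N (w, y)) T]
  exact lintegral_lintegral_swap (hK.comp measurable_swap).aemeasurable

theorem lintegral_lintegral_grrKernel :
    ∫⁻ x, ∫⁻ v, grrKernel T ψ φ N (x, v)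
      = ∫⁻ w in Ioo 0 T, ∫⁻ v in Ioo 0 w, ENNReal.ofReal (ψ (N w v / φ (w - v))) := by
  have h : ∀ x, ∫⁻ v, grrKernel T ψ φ N (x, v) = (Ioo 0 T).indicator
      (fun w => ∫⁻ v in Ioo 0 w, ENNReal.ofReal (ψ (N w v / φ (w - v)))) x := by
    intro x
    by_cases hx : x ∈ Ioo 0 T
    · rw [indicator_of_mem hx, ← lintegral_indicator measurableSet_Ioo]
      congr 1 with v
      simp only [grrKernel, indicator_apply, openTriangle, mem_ofPred_eq, mem_Ioo]
      grind
    · rw [indicator_of_notMem hx]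
      convert lintegral_zero with v
      exact indicator_of_notMem (fun h => hx ⟨h.1.trans h.2.1, h.2.2⟩) _
  simp_rw [h]
  exact lintegral_indicator measurableSet_Ioo _

end Kernel

section Chain

variable {T C U : ℝ} {N : ℝ → ℝ → ℝ} {ψ ψinv : ℝ → ℝ} {φ : StieltjesFunction ℝ}

theorem tendsto_zero_of_tendsto_diag (hN : ContinuousOn (uncurry N) (closedTriangle T))
    (hdiag : ∀ x, 0 ≤ x → x ≤ T → N x x = 0) {s : ℝ} (hs : 0 ≤ s) (hsT : s ≤ T)
    {x : ℕ → ℝ} (hx : Tendsto x atTop (𝓝 s)) (hsx : ∀ n, s ≤ x n) (hxT : ∀ n, x n ≤ T) :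
    Tendsto (fun n => N (x n) s) atTop (𝓝 0) := by
  have hxs : Tendsto (fun n => (x n, s)) atTop (𝓝[closedTriangle T] (s, s)) :=
    tendsto_nhdsWithin_iff.2
      ⟨hx.prodMk_nhds tendsto_const_nhds, .of_forall fun n => ⟨hs, hsx n, hxT n⟩⟩
  have h := (hN (s, s) ⟨hs, le_rfl, hsT⟩).tendsto.comp hxs
  rwa [uncurry_apply_pair, hdiag s hs hsT] at h

theorem exists_next_chain_point (hK : Measurable (grrKernel T ψ φ N)) (hN0 : ∀ x y, 0 ≤ N x y)
    (hψ : ∀ x y, 0 ≤ x → 0 ≤ y → (x ≤ ψinv y ↔ ψ x ≤ y)) (hinv0 : ∀ y, 0 ≤ y → 0 ≤ ψinv y)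
    (hφc : ContinuousOn φ (Ici 0)) (hφm : StrictMonoOn φ (Ici 0)) (hφ0 : φ 0 = 0)
    (hU0 : 0 ≤ U) (hU : ∫⁻ x, ∫⁻ v, grrKernel T ψ φ N (x, v) ≤ ENNReal.ofReal U)
    {s x D : ℝ} (hs : 0 ≤ s) (hsx : s < x) (hxT : x < T) (hxD : x - s < D)
    (hx : ∫⁻ v, grrKernel T ψ φ N (x, v) ≤ ENNReal.ofReal (2 * U / D)) :
    ∃ y d, (s < y ∧ y < T ∧ y - s < d ∧
        ∫⁻ v, grrKernel T ψ φ N (y, v) ≤ ENNReal.ofReal (2 * U / d)) ∧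
      d < x - s ∧ φ d = φ (x - s) / 2 ∧ N x y ≤ ψinv (4 * U / (d * D)) * φ (x - s) := by
  obtain ⟨d, ⟨hd0, hdx⟩, hφd⟩ := exists_mem_Ioo_eq_half hφc hφ0 (sub_pos.2 hsx)
    (pos_of_strictMonoOn_Ici hφm hφ0 (sub_pos.2 hsx))
  have hD : 0 < D := (sub_pos.2 hsx).trans hxD
  have hvol : volume (Ioo s (s + d)) = ENNReal.ofReal d := by simp [Real.volume_Ioo]
  obtain ⟨y, ⟨hsy, hyd⟩, hy, hxy⟩ := exists_mem_le_two_mul_div_of_setLIntegral_le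
    (s := Ioo s (s + d)) (g := fun v => grrKernel T ψ φ N (x, v)) (by simpa [hvol] using hd0)
    (by simp [hvol])
    hK.lintegral_prod_right'.aemeasurable (hK.comp measurable_prodMk_left).aemeasurable
    ENNReal.ofReal_ne_top ENNReal.ofReal_ne_top
    ((setLIntegral_le_lintegral _ _).trans hU) ((setLIntegral_le_lintegral _ _).trans hx)
  have hmem : (x, y) ∈ openTriangle T := ⟨hs.trans_lt hsy, by linarith, hxT⟩
  have hφxy : 0 < φ (x - y) := pos_of_strictMonoOn_Ici hφm hφ0 (by linarith)
  rw [hvol, two_mul_ofReal_div_ofReal hd0] at hy hxy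
  rw [grrKernel, indicator_of_mem hmem, ENNReal.ofReal_le_ofReal_iff (by positivity)] at hxy
  have hbound : N x y / φ (x - y) ≤ ψinv (4 * U / (d * D)) := by
    rw [hψ _ _ (div_nonneg (hN0 x y) hφxy.le) (by positivity)]
    convert hxy using 1
    field_simp
    ring
  refine ⟨y, d, ⟨hsy, by linarith, by linarith, hy⟩, hdx, hφd, ?_⟩
  calc N x y ≤ ψinv (4 * U / (d * D)) * φ (x - y) := (div_le_iff₀ hφxy).1 hbound
    _ ≤ ψinv (4 * U / (d * D)) * φ (x - s) :=
      mul_le_mul_of_nonneg_left (φ.mono (by linarith)) (hinv0 _ (by positivity))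

theorem exists_chain_to_left (hK : Measurable (grrKernel T ψ φ N)) (hN0 : ∀ x y, 0 ≤ N x y)
    (hψ : ∀ x y, 0 ≤ x → 0 ≤ y → (x ≤ ψinv y ↔ ψ x ≤ y)) (hinv0 : ∀ y, 0 ≤ y → 0 ≤ ψinv y)
    (hφc : ContinuousOn φ (Ici 0)) (hφm : StrictMonoOn φ (Ici 0)) (hφ0 : φ 0 = 0)
    (hU0 : 0 ≤ U) (hU : ∫⁻ x, ∫⁻ v, grrKernel T ψ φ N (x, v) ≤ ENNReal.ofReal U)
    {s a t : ℝ} (hs : 0 ≤ s) (hsa : s < a) (hat : a < t) (htT : t ≤ T)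
    (ha : ∫⁻ v, grrKernel T ψ φ N (a, v) ≤ ENNReal.ofReal (2 * U / (t - s))) :
    ∃ x D : ℕ → ℝ, x 0 = a ∧ ∀ n, (s < x n ∧ x n < T ∧ x n - s < D n) ∧
      D (n + 1) < x n - s ∧ φ (D (n + 1)) = φ (x n - s) / 2 ∧
      N (x n) (x (n + 1)) ≤ ψinv (4 * U / (D (n + 1) * D n)) * φ (x n - s) := by
  obtain ⟨p, hp0, hp⟩ := exists_seq_of_forall_exists
    (P := fun p : ℝ × ℝ => s < p.1 ∧ p.1 < T ∧ p.1 - s < p.2 ∧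
      ∫⁻ v, grrKernel T ψ φ N (p.1, v) ≤ ENNReal.ofReal (2 * U / p.2))
    (r := fun p q => q.2 < p.1 - s ∧ φ q.2 = φ (p.1 - s) / 2 ∧
      N p.1 q.1 ≤ ψinv (4 * U / (q.2 * p.2)) * φ (p.1 - s))
    (fun p ⟨hsp, hpT, hpD, hp⟩ =>
      let ⟨y, d, hy, hyd⟩ :=
        exists_next_chain_point hK hN0 hψ hinv0 hφc hφm hφ0 hU0 hU hs hsp hpT hpD hp
      ⟨(y, d), hy, hyd⟩)
    (a := (a, t - s)) ⟨hsa, hat.trans_le htT, by linarith, ha⟩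
  refine ⟨fun n => (p n).1, fun n => (p n).2, by simp [hp0], fun n => ?_⟩
  obtain ⟨⟨h₁, h₂, h₃, -⟩, h₄⟩ := hp n
  exact ⟨⟨h₁, h₂, h₃⟩, h₄⟩

variable
  (hN : ContinuousOn (uncurry N) (closedTriangle T)) (hdiag : ∀ x, 0 ≤ x → x ≤ T → N x x = 0)
  (hN0 : ∀ x y, 0 ≤ N x y)
  (htri : ∀ l₁ u l₂, 0 ≤ l₁ → l₁ < u → u < l₂ → l₂ ≤ T →
    N l₂ l₁ ≤ N l₂ u + N u l₁ + ψinv (4 * C / (l₂ - l₁) ^ 2) * φ (l₂ - l₁))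
  (hψc : ContinuousOn ψ (Ici 0)) (hψ : ∀ x y, 0 ≤ x → 0 ≤ y → (x ≤ ψinv y ↔ ψ x ≤ y))
  (hinv0 : ∀ y, 0 ≤ y → 0 ≤ ψinv y)
  (hφc : ContinuousOn φ (Ici 0)) (hφm : StrictMonoOn φ (Ici 0)) (hφ0 : φ 0 = 0)
  (hU0 : 0 ≤ U) (hC0 : 0 ≤ C) (hU : ∫⁻ x, ∫⁻ v, grrKernel T ψ φ N (x, v) ≤ ENNReal.ofReal U)
include hN hdiag hN0 htri hψc hψ hinv0 hφc hφm hφ0 hU0 hC0 hU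

theorem ofReal_le_four_mul_lintegral_left {s a t : ℝ} (hs : 0 ≤ s) (hsa : s < a) (hat : a < t)
    (htT : t ≤ T) (ha : ∫⁻ v, grrKernel T ψ φ N (a, v) ≤ ENNReal.ofReal (2 * U / (t - s))) :
    ENNReal.ofReal (N a s) ≤ 4 * ∫⁻ r in Ioc 0 (t - s), grrIntegrand ψinv U C r ∂φ.measure := by
  have hK := measurable_grrKernel hN hN0 hψc hφc fun _ => pos_of_strictMonoOn_Ici hφm hφ0
  obtain ⟨x, D, rfl, hchain⟩ :=
    exists_chain_to_left hK hN0 hψ hinv0 hφc hφm hφ0 hU0 hU hs hsa hat htT ha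
  have hδ : ∀ n, 0 < x n - s := fun n => sub_pos.2 (hchain n).1.1
  have hDδ : ∀ n, D (n + 1) < x n - s := fun n => (hchain n).2.1
  have hδD : ∀ n, x n - s < D n := fun n => (hchain n).1.2.2
  have hD : ∀ n, 0 < D n := fun n => (hδ n).trans (hδD n)
  have hφD : ∀ n, φ (D (n + 1)) = φ (x n - s) / 2 := fun n => (hchain n).2.2.1
  have hφδ : ∀ n, φ (x (n + 1) - s) ≤ φ (x n - s) / 2 := fun n =>
    (hφD n) ▸ φ.mono (hδD (n + 1)).le
  have hlink : ∀ n,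
      ENNReal.ofReal (N (x n) (x (n + 1)) + ψinv (4 * C / (x n - s) ^ 2) * φ (x n - s))
        ≤ 4 * ∫⁻ r in Ioc (D (n + 2)) (D (n + 1)), grrIntegrand ψinv U C r ∂φ.measure := by
    intro n
    have hle : N (x n) (x (n + 1)) + ψinv (4 * C / (x n - s) ^ 2) * φ (x n - s)
        ≤ (ψinv (4 * U / (D (n + 1) * D n)) + ψinv (4 * C / (x n - s) ^ 2)) * φ (x n - s) := by
      rw [add_mul]
      linarith [(hchain n).2.2.2]
    -- `φ (x n - s) = 2 φ (D (n + 1))` and `φ (D (n + 2)) ≤ φ (D (n + 1)) / 2`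
    have hφ4 : φ (x n - s) ≤ 4 * (φ (D (n + 1)) - φ (D (n + 2))) := by
      linarith [hφD n, hφD (n + 1), hφδ n]
    rw [← ENNReal.ofReal_ofNat 4]
    refine (ENNReal.ofReal_le_ofReal hle).trans (ofReal_mul_le_mul_lintegral_Ioc φ
      (add_nonneg (hinv0 _ (div_nonneg (by positivity) (mul_pos (hD _) (hD n)).le))
        (hinv0 _ (by positivity))) (by norm_num) hφ4 fun r ⟨hr₁, hr₂⟩ =>
      ofReal_add_le_grrIntegrand (monotoneOn_of_le_iff_le hinv0 hψ) hinv0 hU0 hC0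
        ((hD _).trans hr₁) ?_ ?_)
    · nlinarith [hDδ n, hδD n, (hD (n + 2)).trans hr₁]
    · nlinarith [hDδ n, (hD (n + 2)).trans hr₁]
  have htail : Tendsto (fun n => N (x n) s) atTop (𝓝 0) :=
    tendsto_zero_of_tendsto_diag hN hdiag hs (by linarith)
      (by simpa using (tendsto_zero_of_apply_le_half hφm hφ0 hδ hφδ).add_const s)
      (fun n => (hchain n).1.1.le) (fun n => (hchain n).1.2.1.le)
  refine ofReal_le_mul_lintegral_Ioc_of_le_add (D := fun n => D (n + 1))
    (antitone_nat_of_succ_le fun n => ((hDδ (n + 1)).trans (hδD (n + 1))).le)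
    (fun n => (hD (n + 1)).le) (by linarith [hDδ 0]) (fun n => ?_) hlink htail
  linarith [htri s (x (n + 1)) (x n) hs (hchain (n + 1)).1.1 (by linarith [hδD (n + 1), hDδ n])
    (hchain n).1.2.1.le]

theorem ofReal_le_four_mul_lintegral_right {s a t : ℝ} (hs : 0 ≤ s) (hsa : s < a) (hat : a < t)
    (htT : t ≤ T) (ha : ∫⁻ w, grrKernel T ψ φ N (w, a) ≤ ENNReal.ofReal (2 * U / (t - s))) :
    ENNReal.ofReal (N t a) ≤ 4 * ∫⁻ r in Ioc 0 (t - s), grrIntegrand ψinv U C r ∂φ.measure := by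
  have hK := measurable_grrKernel hN hN0 hψc hφc fun _ => pos_of_strictMonoOn_Ici hφm hφ0
  have htri' : ∀ l₁ u l₂, 0 ≤ l₁ → l₁ < u → u < l₂ → l₂ ≤ T →
      timeReverse T N l₂ l₁ ≤ timeReverse T N l₂ u + timeReverse T N u l₁
        + ψinv (4 * C / (l₂ - l₁) ^ 2) * φ (l₂ - l₁) := by
    intro l₁ u l₂ h₀ h₁ h₂ hT
    have h := htri (T - l₂) (T - u) (T - l₁) (by linarith) (by linarith) (by linarith)
      (by linarith)
    rw [sub_sub_sub_cancel_left] at h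
    simp only [timeReverse]
    linarith
  have h := ofReal_le_four_mul_lintegral_left (continuousOn_timeReverse hN)
    (fun x hx hxT => hdiag _ (by linarith) (by linarith)) (fun _ _ => hN0 _ _) htri' hψc hψ hinv0
    hφc hφm hφ0 hU0 hC0 ((lintegral_lintegral_grrKernel_timeReverse hK).trans_le hU)
    (s := T - t) (a := T - a) (t := T - s) (by linarith) (by linarith) (by linarith)
    (by linarith)
    (by rwa [lintegral_grrKernel_timeReverse, sub_sub_cancel, sub_sub_sub_cancel_left])
  simpa [timeReverse, sub_sub_sub_cancel_left] using h

theorem ofReal_le_nine_mul_lintegral {s t : ℝ} (hs : 0 ≤ s) (hst : s < t) (htT : t ≤ T) :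
    ENNReal.ofReal (N t s) ≤ 9 * ∫⁻ r in Ioc 0 (t - s), grrIntegrand ψinv U C r ∂φ.measure := by
  set Q := ∫⁻ r in Ioc 0 (t - s), grrIntegrand ψinv U C r ∂φ.measure
  have hK := measurable_grrKernel hN hN0 hψc hφc fun _ => pos_of_strictMonoOn_Ici hφm hφ0
  have hvol : volume (Ioo s t) = ENNReal.ofReal (t - s) := Real.volume_Ioo
  have hUcol : ∫⁻ v, ∫⁻ w, grrKernel T ψ φ N (w, v) ≤ ENNReal.ofReal U := by
    rwa [lintegral_lintegral_swap (f := fun v w => grrKernel T ψ φ N (w, v))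
      (hK.comp measurable_swap).aemeasurable]
  obtain ⟨a, ⟨hsa, hat⟩, ha_row, ha_col⟩ := exists_mem_le_two_mul_div_of_setLIntegral_le
    (s := Ioo s t) (f := fun x => ∫⁻ v, grrKernel T ψ φ N (x, v))
    (g := fun v => ∫⁻ w, grrKernel T ψ φ N (w, v)) (by simp [hvol, hst]) (by simp [hvol])
    hK.lintegral_prod_right'.aemeasurable
    (hK.comp measurable_swap).lintegral_prod_right'.aemeasurable
    ENNReal.ofReal_ne_top ENNReal.ofReal_ne_top
    ((setLIntegral_le_lintegral _ _).trans hU) ((setLIntegral_le_lintegral _ _).trans hUcol)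
  rw [hvol, two_mul_ofReal_div_ofReal (sub_pos.2 hst)] at ha_row ha_col
  have hdefect : ENNReal.ofReal (ψinv (4 * C / (t - s) ^ 2) * φ (t - s)) ≤ Q := by
    simpa only [ENNReal.ofReal_one, one_mul] using ofReal_mul_le_mul_lintegral_Ioc φ
      (G := grrIntegrand ψinv U C) (k := 1) (hinv0 _ (by positivity)) zero_le_one
      (by simp [hφ0]) fun r hr => (ENNReal.ofReal_le_ofReal (apply_four_mul_div_le_of_sq_le
        (monotoneOn_of_le_iff_le hinv0 hψ) hC0 hr.1 (pow_le_pow_left₀ hr.1.le hr.2 2))).trans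
        le_add_self
  calc ENNReal.ofReal (N t s)
      ≤ ENNReal.ofReal (N t a) + ENNReal.ofReal (N a s)
          + ENNReal.ofReal (ψinv (4 * C / (t - s) ^ 2) * φ (t - s)) := by
        refine (ENNReal.ofReal_le_ofReal (htri s a t hs hsa hat htT)).trans ?_
        refine ENNReal.ofReal_add_le.trans ?_
        gcongr
        exact ENNReal.ofReal_add_le
    _ ≤ 4 * Q + 4 * Q + Q := by
        gcongr
        · exact ofReal_le_four_mul_lintegral_right hN hdiag hN0 htri hψc hψ hinv0 hφc hφm hφ0 hU0
            hC0 hU hs hsa hat htT ha_col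
        · exact ofReal_le_four_mul_lintegral_left hN hdiag hN0 htri hψc hψ hinv0 hφc hφm hφ0 hU0
            hC0 hU hs hsa hat htT ha_row
    _ = 9 * Q := by ring

end Chain

theorem setLIntegral_psiInvE_top (ψinv : ℝ → ℝ) {φ : StieltjesFunction ℝ} {L : ℝ}
    (hL : φ 0 < φ L) (g : ℝ → ℝ≥0∞) :
    ∫⁻ r in Ioc 0 L, (psiInvE ψinv (4 * ⊤ / ENNReal.ofReal (r ^ 2)) + g r) ∂φ.measure = ⊤ := by
  have htop : ∀ r : ℝ, 4 * ⊤ / ENNReal.ofReal (r ^ 2) = ⊤ := fun r => by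
    rw [ENNReal.mul_top (by norm_num)]
    exact ENNReal.top_div_of_ne_top ENNReal.ofReal_ne_top
  simp only [htop, psiInvE, if_true, top_add]
  rw [setLIntegral_const, StieltjesFunction.measure_Ioc, ENNReal.top_mul]
  simpa using hL

theorem setLIntegral_psiInvE_eq (ψinv : ℝ → ℝ) {U : ℝ≥0∞} (hU : U ≠ ⊤) (μ : Measure ℝ)
    (C L : ℝ) :
    ∫⁻ r in Ioc 0 L, (psiInvE ψinv (4 * U / ENNReal.ofReal (r ^ 2))
        + ENNReal.ofReal (ψinv (4 * C / r ^ 2))) ∂μ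
      = ∫⁻ r in Ioc 0 L, grrIntegrand ψinv U.toReal C r ∂μ := by
  refine setLIntegral_congr_fun measurableSet_Ioc fun r hr => ?_
  have hne : 4 * U / ENNReal.ofReal (r ^ 2) ≠ ⊤ :=
    ENNReal.div_ne_top (by finiteness) (by simp [hr.1.ne'])
  rw [grrIntegrand, psiInvE, if_neg hne, ENNReal.toReal_div, ENNReal.toReal_mul,
    ENNReal.toReal_ofNat, ENNReal.toReal_ofReal (sq_nonneg r)]

/-- Garsia–Rodemich–Rumsey inequality for doubly twisted increments,
with an absolute constant `c > 0` independent of all the data.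
The increasing function `φ` is encoded as a Stieltjes function, so that the
Lebesgue–Stieltjes integral `∫ … dφ(r)` is the integral against `φ.measure`,
with values in `[0,∞]`. -/
theorem grr_doubly_twisted_increments :
    ∃ c : ℝ, 0 < c ∧
      ∀ (V : Type u) [NormedAddCommGroup V] [NormedSpace ℝ V] [CompleteSpace V],
      ∀ (T : ℝ), 0 < T → ∀ (ξ η : ℝ), 0 ≤ ξ → 0 ≤ η →
      ∀ R : ℝ → ℝ → V,
      ContinuousOn (fun p : ℝ × ℝ => R p.1 p.2)
        {p : ℝ × ℝ | 0 ≤ p.2 ∧ p.2 ≤ p.1 ∧ p.1 ≤ T} →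
      (∀ t : ℝ, 0 ≤ t → t ≤ T → R t t = 0) →
      ∀ (ψ : ℝ → ℝ) (φ : StieltjesFunction ℝ),
      ContinuousOn ψ (Set.Ici 0) → StrictMonoOn ψ (Set.Ici 0) →
      ψ 0 = 0 → Filter.Tendsto ψ Filter.atTop Filter.atTop →
      ContinuousOn φ (Set.Ici 0) → StrictMonoOn φ (Set.Ici 0) → φ 0 = 0 →
      -- ψ⁻¹ : the inverse of ψ on [0,∞)
      ∀ ψinv : ℝ → ℝ,
      (∀ x : ℝ, 0 ≤ x → ψinv (ψ x) = x) →
      (∀ y : ℝ, 0 ≤ y → ψ (ψinv y) = y) →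
      (∀ y : ℝ, 0 ≤ y → 0 ≤ ψinv y) →
      ∀ C : ℝ, 0 ≤ C →
      (∀ l₁ l₂ : ℝ, 0 ≤ l₁ → l₁ < l₂ → l₂ ≤ T → ∀ u : ℝ, l₁ ≤ u → u ≤ l₂ →
        ‖R l₂ l₁ - Real.exp (-η * (u - l₁)) • R l₂ u
            - Real.exp (-ξ * (l₂ - u)) • R u l₁‖
          ≤ ψinv (4 * C / (l₂ - l₁) ^ 2) * φ (l₂ - l₁)) →
      ∀ s t : ℝ, 0 ≤ s → s ≤ t → t ≤ T →
        ENNReal.ofReal ‖R t s‖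
          ≤ ENNReal.ofReal c *
              ∫⁻ r in Set.Ioc (0 : ℝ) (t - s),
                (psiInvE ψinv
                    (4 * (∫⁻ w in Set.Ioo (0 : ℝ) T, ∫⁻ v in Set.Ioo (0 : ℝ) w,
                            ENNReal.ofReal (ψ (‖R w v‖ / φ (w - v))))
                      / ENNReal.ofReal (r ^ 2))
                  + ENNReal.ofReal (ψinv (4 * C / r ^ 2))) ∂φ.measure := by
  refine ⟨9, by norm_num, ?_⟩
  intro V _ _ _ T _ ξ η hξ hη R hR hRdiag ψ φ hψc hψm _ _ hφc hφm hφ0 ψinv _ hinv hinv0 C hC htw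
    s t hs hst htT
  rcases hst.eq_or_lt with rfl | hst
  · simp [hRdiag s hs htT]
  rw [← lintegral_lintegral_grrKernel (N := fun w v => ‖R w v‖), ENNReal.ofReal_ofNat]
  obtain hU | hU := eq_or_ne (∫⁻ x, ∫⁻ v, grrKernel T ψ φ (fun w v => ‖R w v‖) (x, v)) ⊤
  · rw [hU, setLIntegral_psiInvE_top ψinv (hφm self_mem_Ici (sub_nonneg.2 hst.le) (sub_pos.2 hst)),
      ENNReal.mul_top (by norm_num)]
    exact le_top
  rw [setLIntegral_psiInvE_eq ψinv hU]
  exact ofReal_le_nine_mul_lintegral (T := T) (N := fun w v => ‖R w v‖) hR.norm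
    (fun x hx hxT => by simp [hRdiag x hx hxT]) (fun _ _ => norm_nonneg _)
    (fun l₁ u l₂ h₀ h₁ h₂ hT => norm_le_add_of_norm_doublyTwisted_le hξ hη h₁.le h₂.le
      (htw l₁ l₂ h₀ (h₁.trans h₂) hT u h₁.le h₂.le)) hψc
    (fun x y hx hy => le_rightInv_iff_of_strictMonoOn hψm hinv hinv0 hx hy) hinv0 hφc hφm hφ0
    ENNReal.toReal_nonneg hC (ENNReal.ofReal_toReal hU).ge hs hst htT
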